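/- Let G be a finite abelian group of cardinality N and ψ ∈ L²(G) a unit vector with Fourier transform ψ̂(χ) = (1/√N) Σ_x χ(x)̄ ψ(x) over characters χ of G. Then -Σ_{x∈G} |ψ(x)|² log₂ |ψ(x)|² - Σ_{χ∈Ĝ} |ψ̂(χ)|² log₂ |ψ̂(χ)|² ≥ log₂ N. -/

import Mathlib

set_option maxHeartbeats 1000000
set_option linter.unusedSectionVars false

namespace EntropicUF


noncomputable def phz (p : ℝ) (w : ℂ) (z : ℂ) : ℂ :=
  if w = 0 then 0
  else (w / ‖w‖) * Complex.exp ((p * (1 - z/2)) * (Real.log ‖w‖ : ℂ))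

lemma phz_diff (p : ℝ) (w : ℂ) : Differentiable ℂ (phz p w) := by
  unfold phz
  by_cases h : w = 0
  · simp [h]
  · simp only [if_neg h]
    apply Differentiable.const_mul
    apply Differentiable.cexp
    apply Differentiable.mul_const
    apply Differentiable.const_mul
    exact (differentiable_const 1).sub (differentiable_id.div_const 2)

lemma phz_norm (p : ℝ) (w : ℂ) (z : ℂ) (h : p * (1 - z.re/2) ≠ 0) :
    ‖phz p w z‖ = ‖w‖ ^ (p * (1 - z.re/2)) := by
  unfold phz
  by_cases hw : w = 0
  · simp [hw, Real.zero_rpow h]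
  · rw [if_neg hw, norm_mul, norm_div]
    have hnw : (0:ℝ) < ‖w‖ := norm_pos_iff.mpr hw
    have h1 : ‖(‖w‖ : ℂ)‖ = ‖w‖ := by
      rw [Complex.norm_real]; exact abs_of_pos hnw
    rw [h1, div_self (ne_of_gt hnw), one_mul, Complex.norm_exp]
    have hre : ((p * (1 - z/2)) * (Real.log ‖w‖ : ℂ)).re
        = (p * (1 - z.re/2)) * Real.log ‖w‖ := by
      simp [Complex.mul_re, Complex.ofReal_re, Complex.ofReal_im, Complex.sub_re,
        Complex.div_re]
    rw [hre, Real.rpow_def_of_pos hnw]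
    ring_nf

lemma phz_at (p : ℝ) (w : ℂ) (θ : ℝ) (h : p * (1 - θ/2) = 1) :
    phz p w (θ : ℂ) = w := by
  unfold phz
  by_cases hw : w = 0
  · simp [hw]
  · rw [if_neg hw]
    have hnw : (0:ℝ) < ‖w‖ := norm_pos_iff.mpr hw
    have hexp : ((p:ℂ) * (1 - (θ:ℂ)/2)) = 1 := by
      have := congrArg (fun t : ℝ => (t : ℂ)) h
      push_cast at this
      convert this using 2
    rw [hexp, one_mul, ← Complex.ofReal_exp, Real.exp_log hnw]
    rw [div_mul_cancel₀]
    exact_mod_cast ne_of_gt hnw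

lemma phz_le (p : ℝ) (hp : 0 < p) (w : ℂ) (z : ℂ) (h0 : 0 ≤ z.re) (h1 : z.re ≤ 1) :
    ‖phz p w z‖ ≤ Real.exp (p * |Real.log ‖w‖|) := by
  by_cases hw : w = 0
  · unfold phz; simp only [hw, if_pos, norm_zero]; positivity
  · have hnw : (0:ℝ) < ‖w‖ := norm_pos_iff.mpr hw
    have hexp : p * (1 - z.re/2) ≠ 0 := by
      have : 0 < 1 - z.re/2 := by linarith
      positivity
    rw [phz_norm p w z hexp, Real.rpow_def_of_pos hnw]
    apply Real.exp_le_exp.mpr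
    rw [mul_comm (Real.log ‖w‖)]
    have h2 : 0 ≤ 1 - z.re/2 := by linarith
    have h3 : 1 - z.re/2 ≤ 1 := by linarith
    calc p * (1 - z.re/2) * Real.log ‖w‖ ≤ |p * (1 - z.re/2) * Real.log ‖w‖| := le_abs_self _
      _ = p * (1 - z.re/2) * |Real.log ‖w‖| := by
          rw [abs_mul, abs_of_nonneg (by positivity)]
      _ ≤ p * 1 * |Real.log ‖w‖| := by
          apply mul_le_mul_of_nonneg_right _ (abs_nonneg _)
          apply mul_le_mul_of_nonneg_left h3 (le_of_lt hp)
      _ = p * |Real.log ‖w‖| := by ring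

open Complex.HadamardThreeLines in
lemma HY_norm {ι κ : Type*} [Fintype ι] [Fintype κ]
    (T : κ → ι → ℂ) (c : ℝ) (hc : 0 < c)
    (hTinf : ∀ a x, ‖T a x‖ ≤ c)
    (hT2 : ∀ h : ι → ℂ, ∑ a, ‖∑ x, T a x * h x‖ ^ 2 ≤ ∑ x, ‖h x‖ ^ 2)
    (f : ι → ℂ) (p : ℝ) (hp1 : 1 < p) (hp2 : p < 2)
    (hf : ∑ x, ‖f x‖ ^ p = 1) :
    (∑ a, ‖∑ x, T a x * f x‖ ^ (p/(p-1))) ^ ((p-1)/p) ≤ c ^ (2/p - 1) := by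
  have hp0 : 0 < p := by linarith
  have hpm1 : 0 < p - 1 := by linarith
  set q : ℝ := p / (p - 1) with hq
  have hq0 : 0 < q := by positivity
  have hq2 : 2 < q := by
    rw [hq, lt_div_iff₀ hpm1]; nlinarith
  have hqp : q / p + 1 = q := by rw [hq]; field_simp; ring
  have hinvq : (p - 1)/p = 1/q := by rw [hq, one_div_div]
  set θ : ℝ := 2 / q with hθ
  have hθ0 : 0 < θ := by positivity
  have hθ1 : θ < 1 := by rw [hθ, div_lt_one hq0]; exact hq2
  have hθp : p * (1 - θ/2) = 1 := by
    have h2 : θ/2 = 1/q := by rw [hθ]; ring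
    rw [h2, ← hinvq]; field_simp; ring
  set Tf : κ → ℂ := fun a => ∑ x, T a x * f x with hTf
  set S : ℝ := ∑ a, ‖Tf a‖ ^ q with hS
  have hS0 : 0 ≤ S := Finset.sum_nonneg fun a _ => Real.rpow_nonneg (norm_nonneg _) _
  by_cases hSz : S = 0
  · rw [hSz, Real.zero_rpow (ne_of_gt (by positivity : (0:ℝ) < (p-1)/p))]
    positivity
  have hSpos : 0 < S := lt_of_le_of_ne hS0 (Ne.symm hSz)
  classical
  set g : κ → ℂ := fun a => if Tf a = 0 then 0
    else (starRingEnd ℂ) (Tf a / ‖Tf a‖) * ((‖Tf a‖ ^ (q/p) / S ^ (1/p) : ℝ) : ℂ) with hg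
  have hgnorm : ∀ a, ‖g a‖ = ‖Tf a‖ ^ (q/p) / S ^ (1/p) := by
    intro a
    by_cases h : Tf a = 0
    · simp [hg, h, Real.zero_rpow (ne_of_gt (by positivity : (0:ℝ) < q/p))]
    · have hn : (0:ℝ) < ‖Tf a‖ := norm_pos_iff.mpr h
      have hga : g a = (starRingEnd ℂ) (Tf a / ‖Tf a‖) * ((‖Tf a‖ ^ (q/p) / S ^ (1/p) : ℝ) : ℂ) := by
        rw [hg]; simp [h]
      rw [hga, norm_mul]
      have h1 : ‖(starRingEnd ℂ) (Tf a / ‖Tf a‖)‖ = 1 := by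
        rw [RCLike.norm_conj, norm_div, Complex.norm_real, Real.norm_eq_abs,
          abs_of_pos hn, div_self (ne_of_gt hn)]
      have h2 : (0:ℝ) ≤ ‖Tf a‖ ^ (q/p) / S ^ (1/p) :=
        div_nonneg (Real.rpow_nonneg (norm_nonneg _) _) (Real.rpow_nonneg hS0 _)
      rw [h1, one_mul, Complex.norm_real, Real.norm_eq_abs, abs_of_nonneg h2]
  have hgsum : ∑ a, ‖g a‖ ^ p = 1 := by
    have : ∀ a, ‖g a‖ ^ p = ‖Tf a‖ ^ q / S := by
      intro a
      rw [hgnorm a, Real.div_rpow (Real.rpow_nonneg (norm_nonneg _) _)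
        (Real.rpow_nonneg hS0 _), ← Real.rpow_mul (norm_nonneg _),
        ← Real.rpow_mul hS0, div_mul_cancel₀ q (ne_of_gt hp0), one_div,
        inv_mul_cancel₀ (ne_of_gt hp0), Real.rpow_one]
    rw [Finset.sum_congr rfl fun a _ => this a, ← Finset.sum_div, ← hS, div_self hSz]
  set Φ : ℂ → ℂ := fun z => ∑ a, (∑ x, T a x * phz p (f x) z) * phz p (g a) z with hΦ
  have hdiff : Differentiable ℂ Φ := by
    apply Differentiable.fun_sum
    intro a _
    exact (Differentiable.fun_sum fun x _ => (phz_diff p (f x)).const_mul _).mul (phz_diff p (g a))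
  have hbd : BddAbove ((norm ∘ Φ) '' Complex.HadamardThreeLines.verticalClosedStrip 0 1) := by
    rw [bddAbove_def]
    refine ⟨∑ a, (∑ x, c * Real.exp (p * |Real.log ‖f x‖|)) * Real.exp (p * |Real.log ‖g a‖|), ?_⟩
    rintro r ⟨z, hz, rfl⟩
    obtain ⟨hz0, hz1⟩ : 0 ≤ z.re ∧ z.re ≤ 1 := hz
    simp only [Function.comp_apply]
    calc ‖Φ z‖ ≤ ∑ a, ‖(∑ x, T a x * phz p (f x) z) * phz p (g a) z‖ := norm_sum_le _ _
      _ ≤ _ := by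
        apply Finset.sum_le_sum
        intro a _
        rw [norm_mul]
        have hin : ‖∑ x, T a x * phz p (f x) z‖ ≤ ∑ x, c * Real.exp (p * |Real.log ‖f x‖|) := by
          calc ‖∑ x, T a x * phz p (f x) z‖ ≤ ∑ x, ‖T a x * phz p (f x) z‖ := norm_sum_le _ _
            _ ≤ _ := by
              apply Finset.sum_le_sum
              intro x _
              rw [norm_mul]
              exact mul_le_mul (hTinf a x) (phz_le p hp0 (f x) z hz0 hz1)
                (norm_nonneg _) (le_of_lt hc)
        exact mul_le_mul hin (phz_le p hp0 (g a) z hz0 hz1) (norm_nonneg _)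
          (Finset.sum_nonneg fun x _ => by positivity)
  have hline0 : ∀ z ∈ Complex.re ⁻¹' {0}, ‖Φ z‖ ≤ c := by
    intro z hz
    have hzre : z.re = 0 := hz
    have hexp0 : p * (1 - z.re/2) = p := by rw [hzre]; ring
    have hexpne : p * (1 - z.re/2) ≠ 0 := by rw [hexp0]; exact ne_of_gt hp0
    calc ‖Φ z‖ ≤ ∑ a, ‖(∑ x, T a x * phz p (f x) z) * phz p (g a) z‖ := norm_sum_le _ _
      _ ≤ ∑ a, c * ‖g a‖ ^ p := by
        apply Finset.sum_le_sum
        intro a _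
        rw [norm_mul, phz_norm p (g a) z hexpne, hexp0]
        apply mul_le_mul_of_nonneg_right _ (Real.rpow_nonneg (norm_nonneg _) _)
        calc ‖∑ x, T a x * phz p (f x) z‖ ≤ ∑ x, ‖T a x * phz p (f x) z‖ := norm_sum_le _ _
          _ ≤ ∑ x, c * ‖f x‖ ^ p := by
            apply Finset.sum_le_sum
            intro x _
            rw [norm_mul, phz_norm p (f x) z hexpne, hexp0]
            exact mul_le_mul_of_nonneg_right (hTinf a x)
              (Real.rpow_nonneg (norm_nonneg _) _)
          _ = c := by rw [← Finset.mul_sum, hf, mul_one]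
      _ = c := by rw [← Finset.mul_sum, hgsum, mul_one]
  have hline1 : ∀ z ∈ Complex.re ⁻¹' {1}, ‖Φ z‖ ≤ 1 := by
    intro z hz
    have hzre : z.re = 1 := hz
    have hexp0 : p * (1 - z.re/2) = p/2 := by rw [hzre]; ring
    have hexpne : p * (1 - z.re/2) ≠ 0 := by rw [hexp0]; positivity
    have hsq : ∀ w : ℂ, ‖phz p w z‖ ^ (2:ℕ) = ‖w‖ ^ p := by
      intro w
      rw [phz_norm p w z hexpne, hexp0, ← Real.rpow_natCast (‖w‖ ^ (p/2)) 2,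
        ← Real.rpow_mul (norm_nonneg _)]
      norm_num
    have hAB : ‖Φ z‖ ≤ ∑ a, ‖∑ x, T a x * phz p (f x) z‖ * ‖phz p (g a) z‖ := by
      calc ‖Φ z‖ ≤ ∑ a, ‖(∑ x, T a x * phz p (f x) z) * phz p (g a) z‖ := norm_sum_le _ _
        _ = _ := by refine Finset.sum_congr rfl fun a _ => norm_mul _ _
    have hA2 : ∑ a, ‖∑ x, T a x * phz p (f x) z‖ ^ (2:ℕ) ≤ 1 := by
      calc ∑ a, ‖∑ x, T a x * phz p (f x) z‖ ^ (2:ℕ)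
          ≤ ∑ x, ‖phz p (f x) z‖ ^ (2:ℕ) := hT2 _
        _ = ∑ x, ‖f x‖ ^ p := Finset.sum_congr rfl fun x _ => hsq _
        _ = 1 := hf
    have hB2 : ∑ a, ‖phz p (g a) z‖ ^ (2:ℕ) = 1 := by
      calc ∑ a, ‖phz p (g a) z‖ ^ (2:ℕ) = ∑ a, ‖g a‖ ^ p :=
            Finset.sum_congr rfl fun a _ => hsq _
        _ = 1 := hgsum
    have hCS := Finset.sum_mul_sq_le_sq_mul_sq Finset.univ
      (fun a => ‖∑ x, T a x * phz p (f x) z‖) (fun a => ‖phz p (g a) z‖)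
    have hnn : 0 ≤ ∑ a, ‖∑ x, T a x * phz p (f x) z‖ * ‖phz p (g a) z‖ :=
      Finset.sum_nonneg fun a _ => mul_nonneg (norm_nonneg _) (norm_nonneg _)
    nlinarith [hAB, hCS, hA2, hB2, hnn]
  have hθmem : (θ:ℂ) ∈ Complex.HadamardThreeLines.verticalClosedStrip 0 1 := by
    show (θ:ℂ).re ∈ Set.Icc (0:ℝ) 1
    rw [Complex.ofReal_re]
    exact ⟨le_of_lt hθ0, le_of_lt hθ1⟩
  have h3l := Complex.HadamardThreeLines.norm_le_interp_of_mem_verticalClosedStrip₀₁'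
    Φ hθmem hdiff.diffContOnCl hbd hline0 hline1
  rw [Complex.ofReal_re] at h3l
  have hΦθ : Φ (θ:ℂ) = ((S ^ ((1:ℝ)/q) : ℝ) : ℂ) := by
    have hterm : ∀ a, (∑ x, T a x * phz p (f x) (θ:ℂ)) * phz p (g a) (θ:ℂ)
        = ((‖Tf a‖ ^ q / S ^ ((1:ℝ)/p) : ℝ) : ℂ) := by
      intro a
      have hin : (∑ x, T a x * phz p (f x) (θ:ℂ)) = Tf a := by
        rw [hTf]
        exact Finset.sum_congr rfl fun x _ => by rw [phz_at p (f x) θ hθp]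
      rw [hin, phz_at p (g a) θ hθp]
      by_cases h : Tf a = 0
      · rw [hg]
        simp [h, Real.zero_rpow (ne_of_gt hq0)]
      · have hn : (0:ℝ) < ‖Tf a‖ := norm_pos_iff.mpr h
        have hga : g a = (starRingEnd ℂ) (Tf a / ‖Tf a‖)
            * ((‖Tf a‖ ^ (q/p) / S ^ ((1:ℝ)/p) : ℝ) : ℂ) := by
          rw [hg]; simp [h]
        rw [hga, ← mul_assoc]
        have hne : (‖Tf a‖ : ℂ) ≠ 0 := by exact_mod_cast ne_of_gt hn
        have hcc : Tf a * (starRingEnd ℂ) (Tf a) = ((‖Tf a‖^2 : ℝ) : ℂ) := by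
          rw [Complex.mul_conj, Complex.normSq_eq_norm_sq]
        have hphase : Tf a * (starRingEnd ℂ) (Tf a / ‖Tf a‖) = (‖Tf a‖ : ℂ) := by
          rw [map_div₀, Complex.conj_ofReal, mul_div_assoc', hcc]
          push_cast
          rw [sq, mul_div_assoc, div_self hne, mul_one]
        rw [hphase, ← Complex.ofReal_mul]
        congr 1
        rw [mul_div_assoc']
        congr 1
        calc ‖Tf a‖ * ‖Tf a‖ ^ (q/p) = ‖Tf a‖ ^ (1:ℝ) * ‖Tf a‖ ^ (q/p) := by
              rw [Real.rpow_one]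
          _ = ‖Tf a‖ ^ ((1:ℝ) + q/p) := (Real.rpow_add hn _ _).symm
          _ = ‖Tf a‖ ^ q := by rw [add_comm, hqp]
    calc Φ (θ:ℂ) = ∑ a, ((‖Tf a‖ ^ q / S ^ ((1:ℝ)/p) : ℝ) : ℂ) :=
          Finset.sum_congr rfl fun a _ => hterm a
      _ = (((∑ a, ‖Tf a‖ ^ q) / S ^ ((1:ℝ)/p) : ℝ) : ℂ) := by
          push_cast; rw [Finset.sum_div]
      _ = ((S ^ ((1:ℝ)/q) : ℝ) : ℂ) := by
          congr 1
          have h1q : (1:ℝ)/q = 1 - 1/p := by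
            rw [← hinvq, sub_div, div_self (ne_of_gt hp0)]
          rw [h1q, Real.rpow_sub hSpos, Real.rpow_one, ← hS]
  have hnormΦ : ‖Φ (θ:ℂ)‖ = S ^ ((1:ℝ)/q) := by
    rw [hΦθ, Complex.norm_real, Real.norm_eq_abs, abs_of_nonneg (Real.rpow_nonneg hS0 _)]
  rw [Real.one_rpow, mul_one, hnormΦ] at h3l
  have hexpeq : 1 - θ = 2/p - 1 := by rw [hθ, hq]; field_simp; ring
  rw [hinvq]
  rw [hexpeq] at h3l
  exact h3l
lemma HY {ι κ : Type*} [Fintype ι] [Fintype κ]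
    (T : κ → ι → ℂ) (c : ℝ) (hc : 0 < c)
    (hTinf : ∀ a x, ‖T a x‖ ≤ c)
    (hT2 : ∀ h : ι → ℂ, ∑ a, ‖∑ x, T a x * h x‖ ^ 2 ≤ ∑ x, ‖h x‖ ^ 2)
    (f : ι → ℂ) (p : ℝ) (hp1 : 1 < p) (hp2 : p < 2) :
    (∑ a, ‖∑ x, T a x * f x‖ ^ (p/(p-1))) ^ ((p-1)/p)
      ≤ c ^ (2/p - 1) * (∑ x, ‖f x‖ ^ p) ^ (1/p) := by
  have hp0 : 0 < p := by linarith
  have hpm1 : 0 < p - 1 := by linarith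
  set B : ℝ := ∑ x, ‖f x‖ ^ p with hB
  have hB0 : 0 ≤ B := Finset.sum_nonneg fun x _ => Real.rpow_nonneg (norm_nonneg _) _
  by_cases hBz : B = 0
  · have hf0 : ∀ x, f x = 0 := by
      intro x
      have h1 : ∀ y ∈ Finset.univ, (0:ℝ) ≤ ‖f y‖ ^ p :=
        fun y _ => Real.rpow_nonneg (norm_nonneg _) _
      have h2 := (Finset.sum_eq_zero_iff_of_nonneg h1).mp hBz x (Finset.mem_univ x)
      have h3 : ‖f x‖ = 0 := by
        by_contra hcon
        have : (0:ℝ) < ‖f x‖ := lt_of_le_of_ne (norm_nonneg _) (Ne.symm hcon)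
        exact absurd h2 (ne_of_gt (Real.rpow_pos_of_pos this p))
      exact norm_eq_zero.mp h3
    have hTf0 : ∀ a, (∑ x, T a x * f x) = 0 := fun a =>
      Finset.sum_eq_zero fun x _ => by rw [hf0 x, mul_zero]
    rw [hBz, Real.zero_rpow (ne_of_gt (by positivity : (0:ℝ) < 1/p)), mul_zero]
    rw [Finset.sum_congr rfl fun a _ => by
      rw [hTf0 a, norm_zero, Real.zero_rpow (ne_of_gt (by positivity : (0:ℝ) < p/(p-1)))]]
    rw [Finset.sum_const, smul_zero,
      Real.zero_rpow (ne_of_gt (by positivity : (0:ℝ) < (p-1)/p))]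
  · have hBpos : 0 < B := lt_of_le_of_ne hB0 (Ne.symm hBz)
    set A : ℝ := B ^ ((1:ℝ)/p) with hA
    have hApos : 0 < A := Real.rpow_pos_of_pos hBpos _
    have hAp : A ^ p = B := by
      rw [hA, ← Real.rpow_mul hB0, one_div, inv_mul_cancel₀ (ne_of_gt hp0), Real.rpow_one]
    set f' : ι → ℂ := fun x => (A⁻¹ : ℝ) * f x with hf'
    have hf'norm : ∀ x, ‖f' x‖ = A⁻¹ * ‖f x‖ := by
      intro x
      rw [hf', norm_mul, Complex.norm_real, Real.norm_eq_abs,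
        abs_of_pos (inv_pos.mpr hApos)]
    have hf'sum : ∑ x, ‖f' x‖ ^ p = 1 := by
      have : ∀ x, ‖f' x‖ ^ p = A⁻¹ ^ p * ‖f x‖ ^ p := by
        intro x
        rw [hf'norm x, Real.mul_rpow (le_of_lt (inv_pos.mpr hApos)) (norm_nonneg _)]
      rw [Finset.sum_congr rfl fun x _ => this x, ← Finset.mul_sum, ← hB,
        Real.inv_rpow (le_of_lt hApos), hAp, inv_mul_cancel₀ hBz]
    have key := HY_norm T c hc hTinf hT2 f' p hp1 hp2 hf'sum
    have hTf' : ∀ a, (∑ x, T a x * f' x) = (A⁻¹ : ℝ) * ∑ x, T a x * f x := by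
      intro a
      rw [Finset.mul_sum]
      exact Finset.sum_congr rfl fun x _ => by rw [hf']; ring
    have hLHS : (∑ a, ‖∑ x, T a x * f' x‖ ^ (p/(p-1))) ^ ((p-1)/p)
        = A⁻¹ * (∑ a, ‖∑ x, T a x * f x‖ ^ (p/(p-1))) ^ ((p-1)/p) := by
      have h1 : ∀ a, ‖∑ x, T a x * f' x‖ ^ (p/(p-1))
          = A⁻¹ ^ (p/(p-1)) * ‖∑ x, T a x * f x‖ ^ (p/(p-1)) := by
        intro a
        rw [hTf' a, norm_mul, Complex.norm_real, Real.norm_eq_abs,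
          abs_of_pos (inv_pos.mpr hApos),
          Real.mul_rpow (le_of_lt (inv_pos.mpr hApos)) (norm_nonneg _)]
      rw [Finset.sum_congr rfl fun a _ => h1 a, ← Finset.mul_sum,
        Real.mul_rpow (Real.rpow_nonneg (le_of_lt (inv_pos.mpr hApos)) _)
          (Finset.sum_nonneg fun a _ => Real.rpow_nonneg (norm_nonneg _) _),
        ← Real.rpow_mul (le_of_lt (inv_pos.mpr hApos))]
      congr 2
      field_simp
      simp [hApos.ne']
    rw [hLHS] at key
    calc (∑ a, ‖∑ x, T a x * f x‖ ^ (p/(p-1))) ^ ((p-1)/p)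
        = A * (A⁻¹ * (∑ a, ‖∑ x, T a x * f x‖ ^ (p/(p-1))) ^ ((p-1)/p)) := by
          rw [← mul_assoc, mul_inv_cancel₀ (ne_of_gt hApos), one_mul]
      _ ≤ A * c ^ (2/p - 1) := by
          apply mul_le_mul_of_nonneg_left key (le_of_lt hApos)
      _ = c ^ (2/p - 1) * B ^ ((1:ℝ)/p) := by rw [mul_comm, hA]
      _ = c ^ (2/p - 1) * (∑ x, ‖f x‖ ^ p) ^ (1/p) := by rw [hB]


lemma rpow_hasDerivAt (r : ℝ) (hr : 0 ≤ r) :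
    HasDerivAt (fun p : ℝ => r ^ p) (r ^ (2:ℝ) * Real.log r) 2 := by
  rcases eq_or_lt_of_le hr with h | h
  · have hz : (fun p : ℝ => r ^ p) =ᶠ[nhds 2] (fun _ => (0:ℝ)) := by
      filter_upwards [Ioo_mem_nhds (by norm_num : (1:ℝ) < 2) (by norm_num : (2:ℝ) < 3)]
        with p hp
      rw [← h, Real.zero_rpow (ne_of_gt (by linarith [hp.1] : (0:ℝ) < p))]
    have h0 : HasDerivAt (fun _ : ℝ => (0:ℝ)) 0 2 := hasDerivAt_const 2 0
    have h2 := h0.congr_of_eventuallyEq hz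
    refine h2.congr_deriv ?_
    rw [← h, Real.zero_rpow (by norm_num : (2:ℝ) ≠ 0), zero_mul]
  · exact (Real.hasStrictDerivAt_const_rpow h 2).hasDerivAt

lemma sum_rpow_hasDerivAt {ι : Type*} [Fintype ι] (u : ι → ℝ) (hu : ∀ x, 0 ≤ u x) :
    HasDerivAt (fun p : ℝ => ∑ x, u x ^ p) (∑ x, u x ^ (2:ℝ) * Real.log (u x)) 2 :=
  HasDerivAt.fun_sum fun x _ => rpow_hasDerivAt (u x) (hu x)

lemma hirschman {ι κ : Type*} [Fintype ι] [Fintype κ]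
    (u : ι → ℝ) (v : κ → ℝ) (hu : ∀ x, 0 ≤ u x) (hv : ∀ a, 0 ≤ v a)
    (hu2 : ∑ x, u x ^ (2:ℝ) = 1) (hv2 : ∑ a, v a ^ (2:ℝ) = 1)
    (c : ℝ) (hc : 0 < c)
    (hHY : ∀ p : ℝ, 1 < p → p < 2 →
      (∑ a, v a ^ (p/(p-1))) ^ ((p-1)/p) ≤ c ^ (2/p - 1) * (∑ x, u x ^ p) ^ (1/p)) :
    -∑ x, u x ^ (2:ℝ) * Real.log (u x) - ∑ a, v a ^ (2:ℝ) * Real.log (v a)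
      ≥ -Real.log c := by
  set F : ℝ → ℝ := fun p =>
    (p-1)/p * Real.log (∑ a, v a ^ (p/(p-1)))
      - (2/p - 1) * Real.log c - (1/p) * Real.log (∑ x, u x ^ p) with hF
  -- positivity of sums
  have hsumu : ∀ p : ℝ, 0 < p → 0 < ∑ x, u x ^ p := by
    intro p hp
    obtain ⟨x0, hx0⟩ : ∃ x, 0 < u x := by
      by_contra hcon
      push_neg at hcon
      have : ∀ x, u x = 0 := fun x => le_antisymm (hcon x) (hu x)
      rw [Finset.sum_congr rfl fun x _ => by
        rw [this x, Real.zero_rpow (by norm_num : (2:ℝ) ≠ 0)]] at hu2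
      simp at hu2
    apply Finset.sum_pos' (fun x _ => Real.rpow_nonneg (hu x) p)
    exact ⟨x0, Finset.mem_univ x0, Real.rpow_pos_of_pos hx0 p⟩
  have hsumv : ∀ s : ℝ, 0 < s → 0 < ∑ a, v a ^ s := by
    intro s hs
    obtain ⟨a0, ha0⟩ : ∃ a, 0 < v a := by
      by_contra hcon
      push_neg at hcon
      have : ∀ a, v a = 0 := fun a => le_antisymm (hcon a) (hv a)
      rw [Finset.sum_congr rfl fun a _ => by
        rw [this a, Real.zero_rpow (by norm_num : (2:ℝ) ≠ 0)]] at hv2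
      simp at hv2
    apply Finset.sum_pos' (fun a _ => Real.rpow_nonneg (hv a) s)
    exact ⟨a0, Finset.mem_univ a0, Real.rpow_pos_of_pos ha0 s⟩
  -- F 2 = 0
  have h21 : (2:ℝ)/(2-1) = 2 := by norm_num
  have hF2 : F 2 = 0 := by
    rw [hF]
    simp only [h21]
    rw [hv2, hu2, Real.log_one]
    norm_num
  -- F ≤ 0 on (1,2)
  have hFneg : ∀ p : ℝ, 1 < p → p < 2 → F p ≤ 0 := by
    intro p hp1 hp2
    have hp0 : 0 < p := by linarith
    have hpm1 : 0 < p - 1 := by linarith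
    have hPv : 0 < ∑ a, v a ^ (p/(p-1)) := hsumv _ (by positivity)
    have hPu : 0 < ∑ x, u x ^ p := hsumu _ hp0
    have h := hHY p hp1 hp2
    have hlog := Real.log_le_log (Real.rpow_pos_of_pos hPv _) h
    rw [Real.log_rpow hPv, Real.log_mul (ne_of_gt (Real.rpow_pos_of_pos hc _))
      (ne_of_gt (Real.rpow_pos_of_pos hPu _)), Real.log_rpow hc,
      Real.log_rpow hPu] at hlog
    rw [hF]
    dsimp only
    linarith [hlog]
  -- derivative of F at 2
  set Du : ℝ := ∑ x, u x ^ (2:ℝ) * Real.log (u x) with hDu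
  set Dv : ℝ := ∑ a, v a ^ (2:ℝ) * Real.log (v a) with hDv
  have hAu : HasDerivAt (fun p : ℝ => ∑ x, u x ^ p) Du 2 := sum_rpow_hasDerivAt u hu
  have hAv : HasDerivAt (fun s : ℝ => ∑ a, v a ^ s) Dv 2 := sum_rpow_hasDerivAt v hv
  -- inner map p ↦ p/(p-1)
  have hs : HasDerivAt (fun p : ℝ => p/(p-1)) (-1) 2 := by
    have h1 : HasDerivAt (fun p : ℝ => p) 1 2 := hasDerivAt_id 2
    have h2 : HasDerivAt (fun p : ℝ => p - 1) 1 2 := h1.sub_const 1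
    have := h1.div h2 (by norm_num : (2:ℝ) - 1 ≠ 0)
    exact this.congr_deriv (by norm_num)
  have hAv2 : HasDerivAt (fun s : ℝ => ∑ a, v a ^ s) Dv ((fun p : ℝ => p/(p-1)) 2) := by
    simp only [h21]
    exact hAv
  have hcomp : HasDerivAt (fun p : ℝ => ∑ a, v a ^ (p/(p-1))) (Dv * (-1)) 2 :=
    by have := hAv2.comp 2 hs; exact this
  have hBv2 : (∑ a, v a ^ ((2:ℝ)/(2-1))) ≠ 0 := by
    rw [h21, hv2]; norm_num
  have hlogv : HasDerivAt (fun p : ℝ => Real.log (∑ a, v a ^ (p/(p-1))))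
      ((Dv * (-1)) / (∑ a, v a ^ ((2:ℝ)/(2-1)))) 2 := hcomp.log hBv2
  have hfrac : HasDerivAt (fun p : ℝ => (p-1)/p) (1/4) 2 := by
    have h1 : HasDerivAt (fun p : ℝ => p - 1) 1 2 := (hasDerivAt_id 2).sub_const 1
    have h2 : HasDerivAt (fun p : ℝ => p) 1 2 := hasDerivAt_id 2
    have := h1.div h2 (by norm_num : (2:ℝ) ≠ 0)
    exact this.congr_deriv (by norm_num)
  have h2p : HasDerivAt (fun p : ℝ => 2/p) (-(1/2)) 2 := by
    simp only [div_eq_mul_inv]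
    exact ((hasDerivAt_inv (by norm_num : (2:ℝ) ≠ 0)).const_mul (2:ℝ)).congr_deriv (by norm_num)
  have hlogu : HasDerivAt (fun p : ℝ => Real.log (∑ x, u x ^ p))
      (Du / (∑ x, u x ^ (2:ℝ))) 2 := hAu.log (by rw [hu2]; norm_num)
  have hinv : HasDerivAt (fun p : ℝ => 1/p) (-(1/4)) 2 := by
    simp only [one_div]
    exact (hasDerivAt_inv (by norm_num : (2:ℝ) ≠ 0)).congr_deriv (by norm_num)
  have hFderiv' := ((hfrac.mul hlogv).sub ((h2p.sub_const 1).mul_const (Real.log c))).sub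
    (hinv.mul hlogu)
  have hFderiv : HasDerivAt F (-Dv/2 + (1/2) * Real.log c - Du/2) 2 := by
    refine hFderiv'.congr_deriv ?_
    have e1 : (2:ℝ)/(2-1) = 2 := by norm_num
    rw [e1, hv2, hu2, Real.log_one]
    ring
  -- sign of derivative
  have hD : 0 ≤ -Dv/2 + (1/2) * Real.log c - Du/2 := by
    have hslope := hasDerivAt_iff_tendsto_slope.mp hFderiv
    have hmono : nhdsWithin (2:ℝ) (Set.Iio 2) ≤ nhdsWithin 2 {(2:ℝ)}ᶜ :=
      nhdsWithin_mono 2 (fun x hx => ne_of_lt hx)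
    have hslope2 := hslope.mono_left hmono
    apply ge_of_tendsto hslope2
    filter_upwards [Ioo_mem_nhdsLT_of_mem
      (⟨by norm_num, le_refl (2:ℝ)⟩ : (2:ℝ) ∈ Set.Ioc (1:ℝ) 2)] with p hp
    rw [slope_def_field]
    have h1 : F p ≤ 0 := hFneg p hp.1 hp.2
    have h2 : p - 2 < 0 := by linarith [hp.2]
    rw [hF2, sub_zero]
    exact div_nonneg_iff.mpr (Or.inr ⟨h1, le_of_lt h2⟩)
  linarith [hD]


variable {G : Type*} [CommGroup G] [Fintype G]
    {Ghat : Type*} [Fintype Ghat] (χ : Ghat → (G →* ℂ))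

lemma norm_char (a : Ghat) (x : G) : ‖χ a x‖ = 1 := by
  have h2 : ‖χ a x‖ ^ (Fintype.card G) = 1 := by
    rw [← norm_pow, ← map_pow, pow_card_eq_one, map_one, norm_one]
  have hn : Fintype.card G ≠ 0 := Fintype.card_ne_zero
  have h0 : (0:ℝ) ≤ ‖χ a x‖ := norm_nonneg _
  rcases lt_trichotomy ‖χ a x‖ 1 with h1 | h1 | h1
  · exact absurd h2 (ne_of_lt (pow_lt_one₀ h0 h1 hn))
  · exact h1
  · exact absurd h2.symm (ne_of_lt (one_lt_pow₀ h1 hn))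

lemma row_orth (hχ : Function.Bijective χ) (a b : Ghat) (hab : a ≠ b) :
    ∑ x, (starRingEnd ℂ) (χ a x) * χ b x = 0 := by
  have hconj : ∀ x, (starRingEnd ℂ) (χ a x) = (χ a x)⁻¹ := fun x =>
    (Complex.inv_eq_conj (norm_char χ a x)).symm
  set η : G → ℂ := fun x => (χ a x)⁻¹ * χ b x with hη
  have hmul : ∀ x y, η (x * y) = η x * η y := by
    intro x y; simp only [hη, map_mul, mul_inv]; ring
  have hne : ∃ y, η y ≠ 1 := by
    by_contra hcon
    push_neg at hcon
    apply hab; apply hχ.1; ext x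
    have h1 := hcon x
    have h0 : χ a x ≠ 0 := by
      intro h; have := norm_char χ a x; rw [h] at this; simp at this
    field_simp [hη] at h1
    simp only [hη] at h1; rw [inv_mul_eq_one₀ h0] at h1; exact h1
  obtain ⟨y, hy⟩ := hne
  have hS : ∑ x, η x = η y * ∑ x, η x := by
    rw [Finset.mul_sum]
    calc ∑ x, η x = ∑ x, η (y * x) := (Fintype.sum_equiv (Equiv.mulLeft y) (fun x => η (y*x)) η (fun x => rfl)).symm
      _ = ∑ x, η y * η x := by simp only [hmul]
  have h0 : (η y - 1) * ∑ x, η x = 0 := by rw [sub_mul, one_mul, ← hS, sub_self]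
  have hfin : ∑ x, η x = 0 := by
    rcases mul_eq_zero.mp h0 with h | h
    · exact absurd (by linear_combination h) hy
    · exact h
  calc ∑ x, (starRingEnd ℂ) (χ a x) * χ b x = ∑ x, η x := by
        refine Finset.sum_congr rfl fun x _ => ?_; rw [hconj x]
    _ = 0 := hfin

lemma col_orth [DecidableEq G] (hχ : Function.Bijective χ) (x y : G) :
    ∑ a, (starRingEnd ℂ) (χ a x) * χ a y
      = if x = y then (Fintype.card G : ℂ) else 0 := by
  have hcard : Fintype.card Ghat = Fintype.card G := by
    have e1 : (G →* ℂ) ≃ (G →* ℂˣ) :=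
      { toFun := MonoidHom.toHomUnits
        invFun := fun f => (Units.coeHom ℂ).comp f
        left_inv := fun f => by ext x; rfl
        right_inv := fun f => by ext x; rfl }
    have : NeZero ((Monoid.exponent G : ℂ)) :=
      ⟨Nat.cast_ne_zero.mpr Monoid.exponent_ne_zero_of_finite⟩
    obtain ⟨e2⟩ := CommGroup.monoidHom_mulEquiv_of_hasEnoughRootsOfUnity G ℂ
    exact Fintype.card_congr ((Equiv.ofBijective χ hχ).trans (e1.trans e2.toEquiv))
  have e : Ghat ≃ G := Fintype.equivOfCardEq hcard
  set U : Matrix G G ℂ := Matrix.of fun i z => χ (e.symm i) z with hU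
  have hUU : U * U.conjTranspose = (Fintype.card G : ℂ) • 1 := by
    ext i j
    simp only [Matrix.mul_apply, Matrix.conjTranspose_apply, Matrix.smul_apply,
      Matrix.one_apply, hU, Matrix.of_apply]
    by_cases h : i = j
    · subst h
      simp only [if_pos rfl, smul_eq_mul, mul_one]
      have hterm : ∀ z, χ (e.symm i) z * star (χ (e.symm i) z) = 1 := by
        intro z
        rw [Complex.star_def, Complex.mul_conj]
        norm_cast
        rw [Complex.normSq_eq_norm_sq, norm_char χ, one_pow]
      rw [Finset.sum_congr rfl (fun z _ => hterm z), Finset.sum_const]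
      simp
    · simp only [if_neg h, smul_eq_mul, mul_zero]
      have hab : e.symm j ≠ e.symm i := fun hc => h (e.symm.injective hc).symm
      have hro := row_orth χ hχ _ _ hab
      calc ∑ z, χ (e.symm i) z * star (χ (e.symm j) z)
          = ∑ z, (starRingEnd ℂ) (χ (e.symm j) z) * χ (e.symm i) z := by
            refine Finset.sum_congr rfl fun z _ => ?_
            rw [Complex.star_def, mul_comm]
        _ = 0 := hro
  have hcomm : U.conjTranspose * U = (Fintype.card G : ℂ) • 1 := by
    have hN : (Fintype.card G : ℂ) ≠ 0 := Nat.cast_ne_zero.mpr Fintype.card_ne_zero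
    have h1 : U * ((Fintype.card G : ℂ)⁻¹ • U.conjTranspose) = 1 := by
      rw [Matrix.mul_smul, hUU, smul_smul, inv_mul_cancel₀ hN, one_smul]
    have h2 := mul_eq_one_comm.mp h1
    calc U.conjTranspose * U
        = (Fintype.card G : ℂ) • (((Fintype.card G : ℂ)⁻¹ • U.conjTranspose) * U) := by
          rw [Matrix.smul_mul, smul_smul, mul_inv_cancel₀ hN, one_smul]
      _ = (Fintype.card G : ℂ) • 1 := by rw [h2]
  have hentry : ∑ i, (starRingEnd ℂ) (χ (e.symm i) x) * χ (e.symm i) y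
      = if x = y then (Fintype.card G : ℂ) else 0 := by
    have h3 := congrFun (congrFun hcomm x) y
    simp only [Matrix.mul_apply, Matrix.conjTranspose_apply, Matrix.smul_apply,
      Matrix.one_apply, hU, Matrix.of_apply, Complex.star_def, smul_eq_mul] at h3
    rw [h3]
    by_cases h : x = y <;> simp [h]
  rw [← hentry]
  exact (Fintype.sum_equiv e.symm _ _ (fun a => rfl)).symm

lemma parseval {G : Type*} [CommGroup G] [Fintype G]
    {Ghat : Type*} [Fintype Ghat] (χ : Ghat → (G →* ℂ)) [DecidableEq G]
    (hχ : Function.Bijective χ) (f : G → ℂ) :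
    ∑ a, ‖∑ x, (starRingEnd ℂ) (χ a x) * f x‖ ^ 2
      = (Fintype.card G : ℝ) * ∑ x, ‖f x‖ ^ 2 := by
  set S : Ghat → ℂ := fun a => ∑ x, (starRingEnd ℂ) (χ a x) * f x with hS
  have hconjS : ∀ a, (starRingEnd ℂ) (S a) = ∑ y, χ a y * (starRingEnd ℂ) (f y) := by
    intro a
    rw [hS, map_sum]
    exact Finset.sum_congr rfl fun y _ => by rw [map_mul, Complex.conj_conj]
  have key : ∑ a, S a * (starRingEnd ℂ) (S a)
      = (Fintype.card G : ℂ) * ∑ x, f x * (starRingEnd ℂ) (f x) := by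
    calc ∑ a, S a * (starRingEnd ℂ) (S a)
        = ∑ a, ∑ x, ∑ y, ((starRingEnd ℂ) (χ a x) * f x) * (χ a y * (starRingEnd ℂ) (f y)) := by
          refine Finset.sum_congr rfl fun a _ => ?_
          rw [hconjS a, hS, Finset.sum_mul_sum]
      _ = ∑ x, ∑ y, ∑ a, ((starRingEnd ℂ) (χ a x) * f x) * (χ a y * (starRingEnd ℂ) (f y)) := by
          rw [Finset.sum_comm]
          exact Finset.sum_congr rfl fun x _ => Finset.sum_comm
      _ = ∑ x, ∑ y, (f x * (starRingEnd ℂ) (f y)) * ∑ a, (starRingEnd ℂ) (χ a x) * χ a y := by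
          refine Finset.sum_congr rfl fun x _ => Finset.sum_congr rfl fun y _ => ?_
          rw [Finset.mul_sum]
          exact Finset.sum_congr rfl fun a _ => by ring
      _ = ∑ x, ∑ y, (f x * (starRingEnd ℂ) (f y)) * (if x = y then (Fintype.card G : ℂ) else 0) := by
          refine Finset.sum_congr rfl fun x _ => Finset.sum_congr rfl fun y _ => ?_
          rw [col_orth χ hχ x y]
      _ = (Fintype.card G : ℂ) * ∑ x, f x * (starRingEnd ℂ) (f x) := by
          rw [Finset.mul_sum]
          refine Finset.sum_congr rfl fun x _ => ?_
          simp [mul_ite, Finset.sum_ite_eq, mul_comm]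
  have cast1 : ((∑ a, ‖S a‖ ^ 2 : ℝ) : ℂ) = ∑ a, S a * (starRingEnd ℂ) (S a) := by
    push_cast
    refine Finset.sum_congr rfl fun a _ => ?_
    rw [Complex.mul_conj']
  have cast2 : ((Fintype.card G : ℝ) * ∑ x, ‖f x‖ ^ 2 : ℂ) = (Fintype.card G : ℂ) * ∑ x, f x * (starRingEnd ℂ) (f x) := by
    push_cast
    congr 1
    refine Finset.sum_congr rfl fun x _ => ?_
    rw [Complex.mul_conj']
  exact_mod_cast cast1.trans (key.trans cast2.symm)

end EntropicUF

open EntropicUF in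
theorem entropic_uncertainty_fourier_abelian
    {G : Type*} [CommGroup G] [Fintype G]
    {Ghat : Type*} [Fintype Ghat] (χ : Ghat → (G →* ℂ))
    (hχ : Function.Bijective χ)
    (ψ : G → ℂ) (hψ : ∑ x, ‖ψ x‖ ^ 2 = 1)
    (ψhat : Ghat → ℂ)
    (hψhat : ∀ a, ψhat a =
      (1 / Real.sqrt (Fintype.card G) : ℝ) * ∑ x, (starRingEnd ℂ) (χ a x) * ψ x) :
    (-∑ x, ‖ψ x‖ ^ 2 * Real.logb 2 (‖ψ x‖ ^ 2)) +
      (-∑ a, ‖ψhat a‖ ^ 2 * Real.logb 2 (‖ψhat a‖ ^ 2)) ≥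
    Real.logb 2 (Fintype.card G) := by
  classical
  have hN : 0 < ((Fintype.card G : ℕ) : ℝ) := by exact_mod_cast Fintype.card_pos
  set c : ℝ := 1 / Real.sqrt (Fintype.card G) with hc_def
  have hsqrtN : 0 < Real.sqrt (Fintype.card G) := Real.sqrt_pos.mpr hN
  have hc : 0 < c := by rw [hc_def]; positivity
  set T : Ghat → G → ℂ := fun a x => (c:ℂ) * (starRingEnd ℂ) (χ a x) with hT
  have hTsum : ∀ h : G → ℂ, ∀ a,
      ∑ x, T a x * h x = (c:ℂ) * ∑ x, (starRingEnd ℂ) (χ a x) * h x := by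
    intro h a
    rw [Finset.mul_sum]
    exact Finset.sum_congr rfl fun x _ => by rw [hT, mul_assoc]
  have hψhat' : ∀ a, ψhat a = ∑ x, T a x * ψ x := fun a => by
    rw [hψhat a, ← hTsum ψ a]
  have hc2 : c ^ (2:ℕ) * ((Fintype.card G : ℕ) : ℝ) = 1 := by
    rw [hc_def, div_pow, one_pow, Real.sq_sqrt (le_of_lt hN)]
    field_simp
  have hTinf : ∀ a x, ‖T a x‖ ≤ c := by
    intro a x
    rw [hT]
    have : ‖(c:ℂ) * (starRingEnd ℂ) (χ a x)‖ = c := by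
      rw [norm_mul, Complex.norm_real, Real.norm_eq_abs, abs_of_pos hc,
        RCLike.norm_conj, norm_char χ a x, mul_one]
    rw [this]
  have hT2eq : ∀ h : G → ℂ, ∑ a, ‖∑ x, T a x * h x‖ ^ 2 = ∑ x, ‖h x‖ ^ 2 := by
    intro h
    have hterm : ∀ a, ‖∑ x, T a x * h x‖ ^ 2
        = c ^ (2:ℕ) * ‖∑ x, (starRingEnd ℂ) (χ a x) * h x‖ ^ 2 := by
      intro a
      rw [hTsum h a, norm_mul, Complex.norm_real, Real.norm_eq_abs, abs_of_pos hc,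
        mul_pow]
    rw [Finset.sum_congr rfl fun a _ => hterm a, ← Finset.mul_sum,
      parseval χ hχ h, ← mul_assoc, hc2, one_mul]
  have hT2 : ∀ h : G → ℂ, ∑ a, ‖∑ x, T a x * h x‖ ^ 2 ≤ ∑ x, ‖h x‖ ^ 2 :=
    fun h => le_of_eq (hT2eq h)
  set u : G → ℝ := fun x => ‖ψ x‖ with hu_def
  set v : Ghat → ℝ := fun a => ‖ψhat a‖ with hv_def
  have hpow2 : ∀ r : ℝ, r ^ (2:ℝ) = r ^ (2:ℕ) := fun r => by
    rw [show (2:ℝ) = ((2:ℕ):ℝ) by norm_num, Real.rpow_natCast]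
  have hu2 : ∑ x, u x ^ (2:ℝ) = 1 := by
    rw [Finset.sum_congr rfl fun x _ => hpow2 (u x)]
    exact hψ
  have hv2 : ∑ a, v a ^ (2:ℝ) = 1 := by
    rw [Finset.sum_congr rfl fun a _ => hpow2 (v a)]
    calc ∑ a, v a ^ (2:ℕ) = ∑ a, ‖∑ x, T a x * ψ x‖ ^ (2:ℕ) :=
          Finset.sum_congr rfl fun a _ => by simp only [hv_def]; rw [hψhat' a]
      _ = ∑ x, ‖ψ x‖ ^ (2:ℕ) := hT2eq ψ
      _ = 1 := hψ
  have hHYfinal : ∀ p : ℝ, 1 < p → p < 2 →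
      (∑ a, v a ^ (p/(p-1))) ^ ((p-1)/p) ≤ c ^ (2/p - 1) * (∑ x, u x ^ p) ^ (1/p) := by
    intro p h1 h2
    have hh := HY T c hc hTinf hT2 ψ p h1 h2
    have hva : ∀ a, ‖∑ x, T a x * ψ x‖ = v a := fun a => by simp only [hv_def]; rw [hψhat' a]
    rw [Finset.sum_congr rfl fun a (_ : a ∈ Finset.univ) => by rw [hva a]] at hh
    exact hh
  have hmain := hirschman u v (fun x => norm_nonneg _) (fun a => norm_nonneg _)
    hu2 hv2 c hc hHYfinal
  have hlogc : -Real.log c = Real.log (Fintype.card G) / 2 := by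
    rw [hc_def, one_div, Real.log_inv, neg_neg, Real.log_sqrt (le_of_lt hN)]
  have hL2 : 0 < Real.log 2 := Real.log_pos (by norm_num)
  -- convert goal from logb to log
  simp only [Real.logb, ge_iff_le]
  have hsumA : ∑ x, ‖ψ x‖ ^ 2 * (Real.log (‖ψ x‖ ^ 2) / Real.log 2)
      = (∑ x, ‖ψ x‖ ^ 2 * Real.log (‖ψ x‖ ^ 2)) / Real.log 2 := by
    rw [Finset.sum_div]
    exact Finset.sum_congr rfl fun x _ => by rw [mul_div_assoc]
  have hsumB : ∑ a, ‖ψhat a‖ ^ 2 * (Real.log (‖ψhat a‖ ^ 2) / Real.log 2)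
      = (∑ a, ‖ψhat a‖ ^ 2 * Real.log (‖ψhat a‖ ^ 2)) / Real.log 2 := by
    rw [Finset.sum_div]
    exact Finset.sum_congr rfl fun a _ => by rw [mul_div_assoc]
  rw [hsumA, hsumB, ← neg_div, ← neg_div, ← add_div, div_le_div_iff_of_pos_right hL2]
  -- now pure log statement
  have hA : ∑ x, ‖ψ x‖ ^ 2 * Real.log (‖ψ x‖ ^ 2)
      = 2 * ∑ x, u x ^ (2:ℝ) * Real.log (u x) := by
    rw [Finset.mul_sum]
    refine Finset.sum_congr rfl fun x _ => ?_
    rw [hpow2 (u x), hu_def]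
    rw [Real.log_pow]
    push_cast
    ring
  have hB : ∑ a, ‖ψhat a‖ ^ 2 * Real.log (‖ψhat a‖ ^ 2)
      = 2 * ∑ a, v a ^ (2:ℝ) * Real.log (v a) := by
    rw [Finset.mul_sum]
    refine Finset.sum_congr rfl fun a _ => ?_
    simp only [hpow2 (v a), hv_def, Real.rpow_two]
    rw [Real.log_pow]
    push_cast
    ring
  rw [hA, hB]
  have := hmain
  rw [ge_iff_le, hlogc] at this
  linarith [this]
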